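/- (Monotonicity and nonexpansiveness.) For every h>0 and λ>0, the operator T_h^λ satisfies: (i) monotonicity: if φ,ψ∈ℝ^{2Q+1} with φ_q≤ψ_q for all q∈𝒬, then (T_h^λφ)_q ≤ (T_h^λψ)_q for all q; (ii) translation invariance: T_h^λ(φ+c𝟙) = T_h^λφ + c𝟙 for every c∈ℝ, where 𝟙 is the all-ones vector; and consequently (iii) ‖T_h^λφ − T_h^λψ‖_∞ ≤ ‖φ−ψ‖_∞ for all φ,ψ. -/

import Mathlib

open MeasureTheory
open scoped Classical

noncomputable section

namespace MM

/-- Inventory index type `{-Q, …, Q}`. -/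
abbrev QI (Q : ℕ) := {q : ℤ // q ∈ Finset.Icc (-(Q : ℤ)) (Q : ℤ)}

/-- Vectors in `ℝ^{2Q+1}`, indexed by the inventory set. -/
abbrev Vec (Q : ℕ) := QI Q → ℝ

/-- The quote rectangle `A = [δ̲, δ̄]²`. -/
def Aset (dlo dhi : ℝ) : Set (ℝ × ℝ) := Set.Icc dlo dhi ×ˢ Set.Icc dlo dhi

/-- Extension of a vector by zero outside the inventory set. -/
def ext {Q : ℕ} (y : Vec Q) (z : ℤ) : ℝ :=
  if h : z ∈ Finset.Icc (-(Q : ℤ)) (Q : ℤ) then y ⟨z, h⟩ else 0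

/-- `Λ_q^a(x) = Λ^a(x)·1_{q > -Q}`. -/
def Lqa {Q : ℕ} (La : ℝ → ℝ) (q : QI Q) (x : ℝ) : ℝ :=
  if -(Q : ℤ) < q.1 then La x else 0

/-- `Λ_q^b(x) = Λ^b(x)·1_{q < Q}`. -/
def Lqb {Q : ℕ} (Lb : ℝ → ℝ) (q : QI Q) (x : ℝ) : ℝ :=
  if q.1 < (Q : ℤ) then Lb x else 0

/-- `Δ_q^a(y, δ)`. -/
def DelA {Q : ℕ} (y : Vec Q) (δ : ℝ × ℝ) (q : QI Q) : ℝ :=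
  if -(Q : ℤ) < q.1 then δ.1 + ext y (q.1 - 1) - y q else 0

/-- `Δ_q^b(y, δ)`. -/
def DelB {Q : ℕ} (y : Vec Q) (δ : ℝ × ℝ) (q : QI Q) : ℝ :=
  if q.1 < (Q : ℤ) then δ.2 + ext y (q.1 + 1) - y q else 0

/-- The deterministic-action Hamiltonian `H_q(y, δ)`. -/
def Ham {Q : ℕ} (σ γ η : ℝ) (La Lb : ℝ → ℝ) (y : Vec Q) (δ : ℝ × ℝ) (q : QI Q) : ℝ :=
  -η * (q.1 : ℝ) ^ 2 - γ * σ ^ 2 / 2 * (q.1 : ℝ) ^ 2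
    + Lqa La q δ.1 / γ * (1 - Real.exp (-γ * DelA y δ q))
    + Lqb Lb q δ.2 / γ * (1 - Real.exp (-γ * DelB y δ q))

/-- The hard Hamiltonian `H_q⁰(y) = sup_{δ ∈ A} H_q(y, δ)`. -/
def H0 {Q : ℕ} (σ γ η dlo dhi : ℝ) (La Lb : ℝ → ℝ) (y : Vec Q) (q : QI Q) : ℝ :=
  ⨆ δ : Aset dlo dhi, Ham σ γ η La Lb y δ.1 q

/-- The soft (entropy-regularized) Hamiltonian `H_q^λ(y)`. -/
def Hlam {Q : ℕ} (σ γ η : ℝ) (La Lb : ℝ → ℝ) (ν : Measure (ℝ × ℝ)) (lam : ℝ)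
    (y : Vec Q) (q : QI Q) : ℝ :=
  lam * Real.log (∫ δ, Real.exp (Ham σ γ η La Lb y δ q / lam) ∂ν)

/-- The generator matrix `K^δ`. -/
def Kmat (Q : ℕ) (σ γ η : ℝ) (La Lb : ℝ → ℝ) (δ : ℝ × ℝ) :
    Matrix (QI Q) (QI Q) ℝ := fun i j =>
  (if j = i then
      γ ^ 2 * σ ^ 2 / 2 * (i.1 : ℝ) ^ 2 + γ * η * (i.1 : ℝ) ^ 2
        - Lqa La i δ.1 - Lqb Lb i δ.2 else 0)
  + (if j.1 = i.1 - 1 then Lqa La i δ.1 * Real.exp (-γ * δ.1) else 0)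
  + (if j.1 = i.1 + 1 then Lqb Lb i δ.2 * Real.exp (-γ * δ.2) else 0)

/-- The matrix exponential, entrywise via its power series. -/
def matExp {n : Type*} [Fintype n] [DecidableEq n] (M : Matrix n n ℝ) :
    Matrix n n ℝ := fun i j => ∑' k : ℕ, (k.factorial : ℝ)⁻¹ * (M ^ k) i j

/-- The one-step certainty-equivalent score `C_h^δ φ (q)`. -/
def CE {Q : ℕ} (σ γ η : ℝ) (La Lb : ℝ → ℝ) (h : ℝ) (δ : ℝ × ℝ) (φ : Vec Q)
    (q : QI Q) : ℝ :=
  -(1 / γ) * Real.log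
    ((matExp (h • Kmat Q σ γ η La Lb δ)).mulVec (fun r => Real.exp (-γ * φ r)) q)

/-- The entropy-regularized CE-score Bellman operator `T_h^λ`. -/
def Top {Q : ℕ} (σ γ η : ℝ) (La Lb : ℝ → ℝ) (ν : Measure (ℝ × ℝ)) (h lam : ℝ)
    (φ : Vec Q) : Vec Q := fun q =>
  h * lam * Real.log (∫ δ, Real.exp (CE σ γ η La Lb h δ φ q / (h * lam)) ∂ν)

/-- The discrete CE-score values: `dval … k = v^{h,λ}_{N-k}`, i.e. `k` backward
steps from the terminal condition `v^{h,λ}_{N,q} = -Φ q²`. -/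
def dval {Q : ℕ} (σ γ η Φ : ℝ) (La Lb : ℝ → ℝ) (ν : Measure (ℝ × ℝ))
    (h lam : ℝ) : ℕ → Vec Q
  | 0 => fun q => -Φ * (q.1 : ℝ) ^ 2
  | k + 1 => Top σ γ η La Lb ν h lam (dval σ γ η Φ La Lb ν h lam k)

/-- The soft-HJB Euler iterates: `eulerVal … k = v̂^{h,λ}_{N-k}`. -/
def eulerVal {Q : ℕ} (σ γ η Φ : ℝ) (La Lb : ℝ → ℝ) (ν : Measure (ℝ × ℝ))
    (h lam : ℝ) : ℕ → Vec Q
  | 0 => fun q => -Φ * (q.1 : ℝ) ^ 2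
  | k + 1 => fun q =>
      eulerVal σ γ η Φ La Lb ν h lam k q
        + h * Hlam σ γ η La Lb ν lam (eulerVal σ γ η Φ La Lb ν h lam k) q

/-- The Gibbs probability measure with score `g` relative to `ν`. -/
def gibbs (ν : Measure (ℝ × ℝ)) (g : ℝ × ℝ → ℝ) : Measure (ℝ × ℝ) :=
  ν.withDensity fun δ => ENNReal.ofReal (Real.exp (g δ) / ∫ ζ, Real.exp (g ζ) ∂ν)

/-- The active projection `P_q`. -/
def Pq {Q : ℕ} (q : QI Q) (ξ : ℝ × ℝ) : ℝ × ℝ :=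
  (if -(Q : ℤ) < q.1 then ξ.1 else 0, if q.1 < (Q : ℤ) then ξ.2 else 0)

/-- Euclidean norm on `ℝ²`. -/
def enorm2 (ξ : ℝ × ℝ) : ℝ := Real.sqrt (ξ.1 ^ 2 + ξ.2 ^ 2)

/-- The optimal quote set `𝒜_q*` for the value vector `y`. -/
def argmaxSet {Q : ℕ} (σ γ η dlo dhi : ℝ) (La Lb : ℝ → ℝ) (y : Vec Q) (q : QI Q) :
    Set (ℝ × ℝ) :=
  {δ ∈ Aset dlo dhi | ∀ ζ ∈ Aset dlo dhi, Ham σ γ η La Lb y ζ q ≤ Ham σ γ η La Lb y δ q}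

/-- Active-coordinate distance to a set of quotes. -/
def distq {Q : ℕ} (q : QI Q) (δ : ℝ × ℝ) (S : Set (ℝ × ℝ)) : ℝ :=
  ⨅ d ∈ S, enorm2 (Pq q (δ - d))

/-- Kullback–Leibler divergence with the `+∞` convention. -/
def KLdiv (π ν : Measure (ℝ × ℝ)) : EReal :=
  if π ≪ ν ∧ Integrable
      (fun δ => ((π.rnDeriv ν δ).toReal) * Real.log ((π.rnDeriv ν δ).toReal)) ν
  then ((∫ δ, ((π.rnDeriv ν δ).toReal) * Real.log ((π.rnDeriv ν δ).toReal) ∂ν : ℝ) : EReal)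
  else ⊤

/-! For `δ ∈ A` the matrix `h K^δ` is Metzler (nonnegative off the diagonal), so
`exp (h K^δ) = e^{-c} exp (h K^δ + c I)` is entrywise nonnegative with positive diagonal. Hence
`φ ↦ C_h^δ φ` is monotone and commutes with adding constants, and both properties survive the
soft maximum `hλ log ∫ exp (· / hλ) dν`; an operator on `ℝ^{2Q+1}` with these two properties is
nonexpansive for the sup norm. The soft maximum is well defined because `δ ↦ C_h^δ φ (q)` is
continuous on the compact rectangle `A`, which carries `ν`. -/

section MatrixExponential

open NormedSpace

attribute [local instance] Matrix.linftyOpNormedRing Matrix.linftyOpNormedAlgebra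

variable {n : Type*} [Fintype n] [DecidableEq n]

lemma hasSum_exp_apply (M : Matrix n n ℝ) (i j : n) :
    HasSum (fun k : ℕ => (k.factorial : ℝ)⁻¹ * (M ^ k) i j) (exp M i j) :=
  Pi.hasSum.1 (Pi.hasSum.1 (exp_series_hasSum_exp' (𝕂 := ℝ) M) i) j

lemma matExp_eq_exp (M : Matrix n n ℝ) : matExp M = exp M := by
  ext i j
  exact (hasSum_exp_apply M i j).tsum_eq

lemma continuous_matExp : Continuous (matExp : Matrix n n ℝ → Matrix n n ℝ) := by
  rw [funext matExp_eq_exp]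
  exact exp_continuous

lemma matExp_add_smul_one (M : Matrix n n ℝ) (c : ℝ) :
    matExp (M + c • 1) = Real.exp c • matExp M := by
  have hexp : exp (algebraMap ℝ (Matrix n n ℝ) c) = algebraMap ℝ _ (Real.exp c) := by
    rw [Real.exp_eq_exp_ℝ]
    exact (algebraMap_exp_comm c).symm
  rw [matExp_eq_exp, matExp_eq_exp,
    Matrix.exp_add_of_commute _ _ ((Commute.one_right M).smul_right c),
    ← Algebra.algebraMap_eq_smul_one, hexp, Algebra.algebraMap_eq_smul_one, mul_smul_one]

lemma matExp_eq_exp_neg_smul_matExp_add (M : Matrix n n ℝ) (c : ℝ) :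
    matExp M = Real.exp (-c) • matExp (M + c • 1) := by
  rw [matExp_add_smul_one, smul_smul, ← Real.exp_add, neg_add_cancel, Real.exp_zero, one_smul]

lemma pow_apply_nonneg {M : Matrix n n ℝ} (hM : ∀ i j, 0 ≤ M i j) (k : ℕ) (i j : n) :
    0 ≤ (M ^ k) i j := by
  induction k generalizing j with
  | zero => rw [pow_zero, Matrix.one_apply]; split_ifs <;> norm_num
  | succ k ih =>
    rw [pow_succ, Matrix.mul_apply]
    exact Finset.sum_nonneg fun l _ => mul_nonneg (ih l) (hM l j)

lemma matExp_apply_nonneg_of_nonneg {M : Matrix n n ℝ} (hM : ∀ i j, 0 ≤ M i j) (i j : n) :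
    0 ≤ matExp M i j := by
  rw [matExp_eq_exp]
  exact (hasSum_exp_apply M i j).nonneg fun k => by
    have := pow_apply_nonneg hM k i j
    positivity

lemma one_le_matExp_apply_self_of_nonneg {M : Matrix n n ℝ} (hM : ∀ i j, 0 ≤ M i j) (i : n) :
    1 ≤ matExp M i i := by
  rw [matExp_eq_exp]
  simpa using le_hasSum (hasSum_exp_apply M i i) 0 fun k _ => by
    have := pow_apply_nonneg hM k i i
    positivity

end MatrixExponential

section Metzler

open scoped Matrix

variable {n : Type*}

def IsMetzler (M : Matrix n n ℝ) : Prop := ∀ i j, i ≠ j → 0 ≤ M i j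

lemma IsMetzler.smul {M : Matrix n n ℝ} (hM : IsMetzler M) {c : ℝ} (hc : 0 ≤ c) :
    IsMetzler (c • M) :=
  fun i j hij => mul_nonneg hc (hM i j hij)

variable [Fintype n] [DecidableEq n]

namespace IsMetzler

variable {M : Matrix n n ℝ}

lemma exists_nonneg_add_smul_one (hM : IsMetzler M) : ∃ c : ℝ, ∀ i j, 0 ≤ (M + c • 1) i j := by
  refine ⟨∑ k, |M k k|, fun i j => ?_⟩
  rcases eq_or_ne i j with rfl | hij
  · have hdiag : |M i i| ≤ ∑ k, |M k k| :=
      Finset.single_le_sum (f := fun k => |M k k|) (fun k _ => abs_nonneg _) (Finset.mem_univ i)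
    simp only [Matrix.add_apply, Matrix.smul_apply, Matrix.one_apply_eq, smul_eq_mul, mul_one]
    linarith [neg_abs_le (M i i)]
  · simpa [Matrix.one_apply_ne hij] using hM i j hij

lemma matExp_apply_nonneg (hM : IsMetzler M) (i j : n) : 0 ≤ matExp M i j := by
  obtain ⟨c, hc⟩ := hM.exists_nonneg_add_smul_one
  rw [matExp_eq_exp_neg_smul_matExp_add M c, Matrix.smul_apply, smul_eq_mul]
  exact mul_nonneg (Real.exp_pos _).le (matExp_apply_nonneg_of_nonneg hc i j)

lemma matExp_apply_self_pos (hM : IsMetzler M) (i : n) : 0 < matExp M i i := by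
  obtain ⟨c, hc⟩ := hM.exists_nonneg_add_smul_one
  rw [matExp_eq_exp_neg_smul_matExp_add M c, Matrix.smul_apply, smul_eq_mul]
  exact mul_pos (Real.exp_pos _) (one_pos.trans_le (one_le_matExp_apply_self_of_nonneg hc i))

lemma mulVec_matExp_pos (hM : IsMetzler M) {u : n → ℝ} (hu : ∀ i, 0 < u i) (i : n) :
    0 < (matExp M *ᵥ u) i :=
  calc 0 < matExp M i i * u i := mul_pos (hM.matExp_apply_self_pos i) (hu i)
    _ ≤ ∑ j, matExp M i j * u j :=
      Finset.single_le_sum (f := fun j => matExp M i j * u j)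
        (fun j _ => mul_nonneg (hM.matExp_apply_nonneg i j) (hu j).le) (Finset.mem_univ i)

lemma mulVec_matExp_mono (hM : IsMetzler M) {u v : n → ℝ} (huv : ∀ i, u i ≤ v i) (i : n) :
    (matExp M *ᵥ u) i ≤ (matExp M *ᵥ v) i :=
  dotProduct_le_dotProduct_of_nonneg_left huv (hM.matExp_apply_nonneg i)

end IsMetzler

end Metzler

section CertaintyEquivalent

variable {Q : ℕ} {σ γ η h : ℝ} {La Lb : ℝ → ℝ} {δ : ℝ × ℝ}

lemma isMetzler_Kmat (hLa : 0 ≤ La δ.1) (hLb : 0 ≤ Lb δ.2) :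
    IsMetzler (Kmat Q σ γ η La Lb δ) := by
  intro i j hij
  have hqa : 0 ≤ Lqa La i δ.1 := by unfold Lqa; split_ifs <;> simp [hLa]
  have hqb : 0 ≤ Lqb Lb i δ.2 := by unfold Lqb; split_ifs <;> simp [hLb]
  simp only [Kmat, if_neg hij.symm, zero_add]
  have hea := Real.exp_pos (-γ * δ.1)
  have heb := Real.exp_pos (-γ * δ.2)
  split_ifs <;> positivity

lemma CE_mono (hγ : 0 < γ) (hK : IsMetzler (h • Kmat Q σ γ η La Lb δ)) {φ ψ : Vec Q}
    (hφψ : ∀ r, φ r ≤ ψ r) (q : QI Q) :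
    CE σ γ η La Lb h δ φ q ≤ CE σ γ η La Lb h δ ψ q := by
  have hlog := Real.log_le_log (hK.mulVec_matExp_pos (fun r => Real.exp_pos _) q)
    (hK.mulVec_matExp_mono (u := fun r => Real.exp (-γ * ψ r)) (v := fun r => Real.exp (-γ * φ r))
      (fun r => Real.exp_le_exp.2 (mul_le_mul_of_nonpos_left (hφψ r) (neg_nonpos.2 hγ.le))) q)
  exact mul_le_mul_of_nonpos_left hlog (by simp [hγ.le])

lemma CE_add_const (hγ : γ ≠ 0) (hK : IsMetzler (h • Kmat Q σ γ η La Lb δ)) (φ : Vec Q)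
    (c : ℝ) (q : QI Q) :
    CE σ γ η La Lb h δ (fun r => φ r + c) q = CE σ γ η La Lb h δ φ q + c := by
  have hu : (fun r => Real.exp (-γ * (φ r + c))) =
      Real.exp (-γ * c) • fun r => Real.exp (-γ * φ r) := by
    ext r
    rw [Pi.smul_apply, smul_eq_mul, ← Real.exp_add]
    ring_nf
  unfold CE
  rw [hu, Matrix.mulVec_smul, Pi.smul_apply, smul_eq_mul,
    Real.log_mul (Real.exp_ne_zero _) (hK.mulVec_matExp_pos (fun r => Real.exp_pos _) q).ne',
    Real.log_exp]
  field_simp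
  ring

end CertaintyEquivalent

section Continuity

variable {Q : ℕ} {σ γ η h dlo dhi : ℝ} {La Lb : ℝ → ℝ}

lemma continuousOn_Kmat (hLa : ContinuousOn La (Set.Icc dlo dhi))
    (hLb : ContinuousOn Lb (Set.Icc dlo dhi)) :
    ContinuousOn (Kmat Q σ γ η La Lb) (Aset dlo dhi) := by
  refine continuousOn_pi.2 fun i => continuousOn_pi.2 fun j => ?_
  simp only [Kmat, Lqa, Lqb]
  split_ifs <;>
    fun_prop (disch := first | exact fun δ hδ => hδ.1 | exact fun δ hδ => hδ.2 | norm_num)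

lemma continuousOn_CE (hLa : ContinuousOn La (Set.Icc dlo dhi))
    (hLb : ContinuousOn Lb (Set.Icc dlo dhi))
    (hK : ∀ δ ∈ Aset dlo dhi, IsMetzler (h • Kmat Q σ γ η La Lb δ)) (φ : Vec Q) (q : QI Q) :
    ContinuousOn (fun δ => CE σ γ η La Lb h δ φ q) (Aset dlo dhi) := by
  have hexp : ContinuousOn (fun δ => matExp (h • Kmat Q σ γ η La Lb δ)) (Aset dlo dhi) :=
    continuous_matExp.comp_continuousOn ((continuousOn_Kmat hLa hLb).const_smul h)
  have hS : ContinuousOn (fun δ => (matExp (h • Kmat Q σ γ η La Lb δ)).mulVec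
      (fun r => Real.exp (-γ * φ r)) q) (Aset dlo dhi) :=
    ((continuous_apply q).comp (continuous_id.matrix_mulVec continuous_const)).comp_continuousOn
      hexp
  exact continuousOn_const.mul
    (hS.log fun δ hδ => ((hK δ hδ).mulVec_matExp_pos (fun r => Real.exp_pos _) q).ne')

end Continuity

lemma _root_.ContinuousOn.integrable_of_ae_mem {α : Type*} [TopologicalSpace α] [T2Space α]
    [MeasurableSpace α] [OpensMeasurableSpace α] {μ : Measure α} [IsFiniteMeasure μ]
    {K : Set α} {f : α → ℝ} (hf : ContinuousOn f K) (hK : IsCompact K) (hμK : ∀ᵐ x ∂μ, x ∈ K) :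
    Integrable f μ := by
  rw [← Measure.restrict_eq_self_of_ae_mem hμK]
  exact hf.integrableOn_compact hK

section LogIntegralExp

variable {α : Type*} [MeasurableSpace α] {μ : Measure α} [NeZero μ] {κ : ℝ} {f g : α → ℝ}

lemma mul_log_integral_exp_div_mono (hκ : 0 < κ)
    (hf : Integrable (fun x => Real.exp (f x / κ)) μ)
    (hg : Integrable (fun x => Real.exp (g x / κ)) μ) (hfg : ∀ᵐ x ∂μ, f x ≤ g x) :
    κ * Real.log (∫ x, Real.exp (f x / κ) ∂μ) ≤ κ * Real.log (∫ x, Real.exp (g x / κ) ∂μ) := by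
  refine mul_le_mul_of_nonneg_left (Real.log_le_log (integral_exp_pos hf) ?_) hκ.le
  refine integral_mono_ae hf hg (hfg.mono fun x hx => ?_)
  exact Real.exp_le_exp.2 (div_le_div_of_nonneg_right hx hκ.le)

lemma mul_log_integral_exp_div_of_ae_eq_add_const (hκ : κ ≠ 0)
    (hf : Integrable (fun x => Real.exp (f x / κ)) μ) {c : ℝ} (hfg : ∀ᵐ x ∂μ, g x = f x + c) :
    κ * Real.log (∫ x, Real.exp (g x / κ) ∂μ) = κ * Real.log (∫ x, Real.exp (f x / κ) ∂μ) + c := by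
  have hint : ∫ x, Real.exp (g x / κ) ∂μ = (∫ x, Real.exp (f x / κ) ∂μ) * Real.exp (c / κ) := by
    rw [← integral_mul_const]
    refine integral_congr_ae (hfg.mono fun x hx => ?_)
    simp only [hx, add_div, Real.exp_add]
  rw [hint, Real.log_mul (integral_exp_pos hf).ne' (Real.exp_ne_zero _), Real.log_exp, mul_add,
    mul_div_cancel₀ c hκ]

end LogIntegralExp

lemma norm_sub_le_of_monotone_of_add_const {ι : Type*} [Fintype ι] {F : (ι → ℝ) → ι → ℝ}
    (hmono : ∀ φ ψ : ι → ℝ, (∀ i, φ i ≤ ψ i) → ∀ i, F φ i ≤ F ψ i)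
    (hadd : ∀ (φ : ι → ℝ) (c : ℝ) (i : ι), F (fun j => φ j + c) i = F φ i + c)
    (φ ψ : ι → ℝ) : ‖F φ - F ψ‖ ≤ ‖φ - ψ‖ := by
  have hle : ∀ φ ψ : ι → ℝ, ∀ i, F φ i ≤ F ψ i + ‖φ - ψ‖ := by
    intro φ ψ i
    rw [← hadd]
    refine hmono _ _ (fun j => ?_) i
    have hj : φ j - ψ j ≤ ‖φ - ψ‖ := (Real.le_norm_self _).trans (norm_le_pi_norm (φ - ψ) j)
    linarith
  refine (pi_norm_le_iff_of_nonneg (norm_nonneg _)).2 fun i => ?_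
  rw [Pi.sub_apply, Real.norm_eq_abs, abs_sub_le_iff]
  exact ⟨by linarith [hle φ ψ i], by linarith [hle ψ φ i, norm_sub_rev φ ψ]⟩

theorem monotone_nonexpansive_general
    (Q : ℕ) (σ γ η dlo dhi Lbar : ℝ)
    (La Lb : ℝ → ℝ) (ν : Measure (ℝ × ℝ)) (m : ℝ × ℝ → ℝ)
    (hγ : 0 < γ)
    (hLa : ContDiffOn ℝ 1 La (Set.Icc dlo dhi)) (hLb : ContDiffOn ℝ 1 Lb (Set.Icc dlo dhi))
    (hLa_bd : ∀ x ∈ Set.Icc dlo dhi, 0 ≤ La x ∧ La x ≤ Lbar)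
    (hLb_bd : ∀ x ∈ Set.Icc dlo dhi, 0 ≤ Lb x ∧ Lb x ≤ Lbar)
    (hν : ν = (volume.restrict (Aset dlo dhi)).withDensity fun δ => ENNReal.ofReal (m δ))
    (hνprob : IsProbabilityMeasure ν)
    (h lam : ℝ) (hh : 0 < h) (hlam : 0 < lam) :
    (∀ φ ψ : Vec Q, (∀ q : QI Q, φ q ≤ ψ q) →
      ∀ q : QI Q, Top σ γ η La Lb ν h lam φ q ≤ Top σ γ η La Lb ν h lam ψ q) ∧
    (∀ φ : Vec Q, ∀ c : ℝ, ∀ q : QI Q,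
      Top σ γ η La Lb ν h lam (fun r => φ r + c) q = Top σ γ η La Lb ν h lam φ q + c) ∧
    (∀ φ ψ : Vec Q,
      ‖Top σ γ η La Lb ν h lam φ - Top σ γ η La Lb ν h lam ψ‖ ≤ ‖φ - ψ‖) := by
  have hA : ∀ᵐ δ ∂ν, δ ∈ Aset dlo dhi := by
    rw [hν]
    exact (withDensity_absolutelyContinuous _ _).ae_le
      (ae_restrict_mem (measurableSet_Icc.prod measurableSet_Icc))
  have hK : ∀ δ ∈ Aset dlo dhi, IsMetzler (h • Kmat Q σ γ η La Lb δ) := fun δ hδ =>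
    (isMetzler_Kmat (hLa_bd _ hδ.1).1 (hLb_bd _ hδ.2).1).smul hh.le
  have hint : ∀ (φ : Vec Q) (q : QI Q),
      Integrable (fun δ => Real.exp (CE σ γ η La Lb h δ φ q / (h * lam))) ν := fun φ q =>
    ((continuousOn_CE hLa.continuousOn hLb.continuousOn hK φ q).div_const _).rexp
      |>.integrable_of_ae_mem (isCompact_Icc.prod isCompact_Icc) hA
  have hmono : ∀ φ ψ : Vec Q, (∀ q : QI Q, φ q ≤ ψ q) →
      ∀ q : QI Q, Top σ γ η La Lb ν h lam φ q ≤ Top σ γ η La Lb ν h lam ψ q :=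
    fun φ ψ hφψ q => mul_log_integral_exp_div_mono (mul_pos hh hlam) (hint φ q) (hint ψ q)
      (hA.mono fun δ hδ => CE_mono hγ (hK δ hδ) hφψ q)
  have hadd : ∀ (φ : Vec Q) (c : ℝ) (q : QI Q),
      Top σ γ η La Lb ν h lam (fun r => φ r + c) q = Top σ γ η La Lb ν h lam φ q + c :=
    fun φ c q => mul_log_integral_exp_div_of_ae_eq_add_const (mul_pos hh hlam).ne' (hint φ q)
      (hA.mono fun δ hδ => CE_add_const hγ.ne' (hK δ hδ) φ c q)
  exact ⟨hmono, hadd, norm_sub_le_of_monotone_of_add_const hmono hadd⟩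

/-- monotonicity, translation invariance, nonexpansiveness. -/
theorem monotone_nonexpansive
    (T : ℝ) (Q : ℕ) (σ γ Φ η dlo dhi Lbar mlo mhi : ℝ)
    (La Lb : ℝ → ℝ) (ν : Measure (ℝ × ℝ)) (m : ℝ × ℝ → ℝ)
    (hT : 0 < T) (hσ : 0 < σ) (hγ : 0 < γ) (hΦ : 0 ≤ Φ) (hη : 0 ≤ η) (hd : dlo < dhi)
    (hLa : ContDiffOn ℝ 1 La (Set.Icc dlo dhi)) (hLb : ContDiffOn ℝ 1 Lb (Set.Icc dlo dhi))
    (hLa_bd : ∀ x ∈ Set.Icc dlo dhi, 0 ≤ La x ∧ La x ≤ Lbar)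
    (hLb_bd : ∀ x ∈ Set.Icc dlo dhi, 0 ≤ Lb x ∧ Lb x ≤ Lbar)
    (hm : Measurable m) (hmlo : 0 < mlo) (hmhi : mlo ≤ mhi)
    (hm_bd : ∀ᵐ δ ∂(volume.restrict (Aset dlo dhi)), mlo ≤ m δ ∧ m δ ≤ mhi)
    (hν : ν = (volume.restrict (Aset dlo dhi)).withDensity fun δ => ENNReal.ofReal (m δ))
    (hνprob : IsProbabilityMeasure ν)
    (h lam : ℝ) (hh : 0 < h) (hlam : 0 < lam) :
    (∀ φ ψ : Vec Q, (∀ q : QI Q, φ q ≤ ψ q) →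
      ∀ q : QI Q, Top σ γ η La Lb ν h lam φ q ≤ Top σ γ η La Lb ν h lam ψ q) ∧
    (∀ φ : Vec Q, ∀ c : ℝ, ∀ q : QI Q,
      Top σ γ η La Lb ν h lam (fun r => φ r + c) q = Top σ γ η La Lb ν h lam φ q + c) ∧
    (∀ φ ψ : Vec Q,
      ‖Top σ γ η La Lb ν h lam φ - Top σ γ η La Lb ν h lam ψ‖ ≤ ‖φ - ψ‖) :=
  monotone_nonexpansive_general Q σ γ η dlo dhi Lbar La Lb ν m hγ hLa hLb hLa_bd hLb_bd hν hνprob h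
    lam hh hlam

end MM
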